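/- arXiv:2007.01830 — 9 statements merged into one kernel-verified Lean document; each statement's English description precedes it below -/
import Mathlib

section
/- There is a function f(c,d,k,ε) such that: for any (c,d)-hypergraph H = (V,E), any edge weight function γ : E → [0,1] with total weight at most k, and any 0 < ε ≤ 1, if every edge e satisfies γ(e) ≤ ε/(2c), then the set of vertices v with ∑_{e ∋ v} γ(e) ≥ ε has at most f(c,d,k,ε) elements; in fact one can take f(c,d,k,ε) = d·(2k/ε)^c. -/
open scoped Classical
open Nat

section aux
variable {α : Type*} [DecidableEq α]

lemma esymm_key (F : Finset α) (x : α → ℝ) (n : ℕ) :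
    ((n : ℝ) + 1) * ∑ A ∈ F.powersetCard (n + 1), ∏ e ∈ A, x e
      = ∑ e ∈ F, x e * ∑ B ∈ (F.erase e).powersetCard n, ∏ b ∈ B, x b := by
  have L : ((n : ℝ) + 1) * ∑ A ∈ F.powersetCard (n + 1), ∏ e ∈ A, x e
      = ∑ A ∈ F.powersetCard (n + 1), ∑ e ∈ A, x e * ∏ b ∈ A.erase e, x b := by
    rw [Finset.mul_sum]
    refine Finset.sum_congr rfl fun A hA => ?_
    obtain ⟨-, hcard⟩ := Finset.mem_powersetCard.1 hA
    have : ∀ e ∈ A, x e * ∏ b ∈ A.erase e, x b = ∏ b ∈ A, x b :=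
      fun e he => Finset.mul_prod_erase A x he
    rw [Finset.sum_congr rfl this, Finset.sum_const, hcard, nsmul_eq_mul]
    push_cast; ring
  rw [L]
  rw [Finset.sum_sigma', Finset.sum_congr rfl
    (fun e (_ : e ∈ F) => Finset.mul_sum _ _ (x e)), Finset.sum_sigma']
  refine Finset.sum_bij' (fun p _ => ⟨p.2, p.1.erase p.2⟩)
    (fun p _ => ⟨insert p.1 p.2, p.1⟩) ?_ ?_ ?_ ?_ ?_
  · rintro ⟨A, e⟩ hp
    simp only [Finset.mem_sigma, Finset.mem_powersetCard] at hp ⊢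
    obtain ⟨⟨hAE, hcard⟩, he⟩ := hp
    exact ⟨hAE he, Finset.erase_subset_erase e hAE,
      by rw [Finset.card_erase_of_mem he, hcard]; rfl⟩
  · rintro ⟨e, B⟩ hp
    simp only [Finset.mem_sigma, Finset.mem_powersetCard] at hp ⊢
    obtain ⟨he, hBE, hcard⟩ := hp
    have heB : e ∉ B := fun h => Finset.notMem_erase e F (hBE h)
    refine ⟨⟨Finset.insert_subset he (hBE.trans (F.erase_subset e)), ?_⟩,
      Finset.mem_insert_self e B⟩
    rw [Finset.card_insert_of_notMem heB, hcard]
  · rintro ⟨A, e⟩ hp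
    simp only [Finset.mem_sigma, Finset.mem_powersetCard] at hp
    simp [Finset.insert_erase hp.2]
  · rintro ⟨e, B⟩ hp
    simp only [Finset.mem_sigma, Finset.mem_powersetCard] at hp
    have heB : e ∉ B := fun h => Finset.notMem_erase e F (hp.2.1 h)
    simp [Finset.erase_insert heB]
  · rintro ⟨A, e⟩ hp; rfl

lemma esymm_upper (n : ℕ) : ∀ (F : Finset α) (x : α → ℝ), (∀ e ∈ F, 0 ≤ x e) →
    (n ! : ℝ) * (∑ A ∈ F.powersetCard n, ∏ e ∈ A, x e) ≤ (∑ e ∈ F, x e) ^ n := by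
  induction n with
  | zero => intro F x _; simp
  | succ n ih =>
    intro F x hx
    have hS : 0 ≤ ∑ e ∈ F, x e := Finset.sum_nonneg hx
    have key := esymm_key F x n
    have h1 : (((n + 1)! : ℕ) : ℝ) * ∑ A ∈ F.powersetCard (n + 1), ∏ e ∈ A, x e
        = (n ! : ℝ) * (((n : ℝ) + 1) * ∑ A ∈ F.powersetCard (n + 1), ∏ e ∈ A, x e) := by
      rw [Nat.factorial_succ]; push_cast; ring
    rw [h1, key, Finset.mul_sum]
    calc (∑ e ∈ F, (n ! : ℝ) * (x e * ∑ B ∈ (F.erase e).powersetCard n, ∏ b ∈ B, x b))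
        ≤ ∑ e ∈ F, x e * (∑ e ∈ F, x e) ^ n := by
          refine Finset.sum_le_sum fun e he => ?_
          have hxe := hx e he
          have hsub : ∑ b ∈ F.erase e, x b ≤ ∑ e ∈ F, x e :=
            Finset.sum_le_sum_of_subset_of_nonneg (F.erase_subset e)
              (fun i hi _ => hx i hi)
          have hnn : 0 ≤ ∑ b ∈ F.erase e, x b :=
            Finset.sum_nonneg fun i hi => hx i (F.erase_subset e hi)
          have := ih (F.erase e) x (fun i hi => hx i (F.erase_subset e hi))
          calc (n ! : ℝ) * (x e * (∑ B ∈ (F.erase e).powersetCard n, ∏ b ∈ B, x b))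
              = x e * ((n ! : ℝ) * ∑ B ∈ (F.erase e).powersetCard n, ∏ b ∈ B, x b) := by ring
            _ ≤ x e * (∑ b ∈ F.erase e, x b) ^ n := by
                exact mul_le_mul_of_nonneg_left this hxe
            _ ≤ x e * (∑ e ∈ F, x e) ^ n := by
                exact mul_le_mul_of_nonneg_left (pow_le_pow_left₀ hnn hsub n) hxe
      _ = (∑ e ∈ F, x e) ^ (n + 1) := by rw [← Finset.sum_mul]; ring

lemma esymm_lower (n : ℕ) : ∀ (F : Finset α) (x : α → ℝ) (m : ℝ), 0 ≤ m →
    (∀ e ∈ F, 0 ≤ x e) → (∀ e ∈ F, x e ≤ m) →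
    (∀ i : ℕ, i < n → 0 ≤ (∑ e ∈ F, x e) - i * m) →
    (∏ i ∈ Finset.range n, ((∑ e ∈ F, x e) - i * m))
      ≤ (n ! : ℝ) * (∑ A ∈ F.powersetCard n, ∏ e ∈ A, x e) := by
  induction n with
  | zero => intro F x m _ _ _ _; simp
  | succ n ih =>
    intro F x m hm hx0 hxm hfac
    set S := ∑ e ∈ F, x e with hSdef
    have h1 : (((n + 1)! : ℕ) : ℝ) * ∑ A ∈ F.powersetCard (n + 1), ∏ e ∈ A, x e
        = (n ! : ℝ) * (((n : ℝ) + 1) * ∑ A ∈ F.powersetCard (n + 1), ∏ e ∈ A, x e) := by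
      rw [Nat.factorial_succ]; push_cast; ring
    rw [h1, esymm_key F x n, Finset.mul_sum]
    have hP : 0 ≤ ∏ i ∈ Finset.range n, (S - (i + 1) * m) :=
      Finset.prod_nonneg fun i hi => by
        have := hfac (i + 1) (by simpa using Finset.mem_range.1 hi)
        push_cast at this ⊢; linarith
    calc (∏ i ∈ Finset.range (n + 1), (S - i * m))
        = S * ∏ i ∈ Finset.range n, (S - (↑(i + 1)) * m) := by
          rw [Finset.prod_range_succ']; push_cast; ring
      _ ≤ ∑ e ∈ F, (n ! : ℝ) * (x e * ∑ B ∈ (F.erase e).powersetCard n, ∏ b ∈ B, x b) := by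
          rw [hSdef, Finset.sum_mul]
          refine Finset.sum_le_sum fun e he => ?_
          have hxe0 := hx0 e he
          have hxem := hxm e he
          have hSe : ∑ b ∈ F.erase e, x b = S - x e := by
            rw [hSdef, ← Finset.add_sum_erase F x he]; ring
          have hIH := ih (F.erase e) x m hm
            (fun i hi => hx0 i (F.erase_subset e hi))
            (fun i hi => hxm i (F.erase_subset e hi))
            (fun i hi => by
              rw [hSe]
              have := hfac (i + 1) (by omega)
              push_cast at this; linarith)
          rw [hSe] at hIH
          have hstep : ∏ i ∈ Finset.range n, (S - (↑(i + 1)) * m)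
              ≤ ∏ i ∈ Finset.range n, (S - x e - i * m) := by
            refine Finset.prod_le_prod (fun i hi => ?_) (fun i hi => ?_)
            · have := hfac (i + 1) (by simpa using Finset.mem_range.1 hi)
              push_cast at this ⊢; linarith
            · push_cast; linarith
          calc x e * (∏ i ∈ Finset.range n, (S - (↑(i + 1)) * m))
              ≤ x e * ∏ i ∈ Finset.range n, (S - x e - i * m) :=
                mul_le_mul_of_nonneg_left hstep hxe0
            _ ≤ x e * ((n ! : ℝ) * ∑ B ∈ (F.erase e).powersetCard n, ∏ b ∈ B, x b) :=
                mul_le_mul_of_nonneg_left hIH hxe0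
            _ = (n ! : ℝ) * (x e * ∑ B ∈ (F.erase e).powersetCard n, ∏ b ∈ B, x b) := by ring

lemma mem_inf_id {V : Type} [Fintype V] [DecidableEq V] (A : Finset (Finset V)) (v : V) :
    v ∈ A.inf id ↔ ∀ e ∈ A, v ∈ e := by
  induction A using Finset.cons_induction with
  | empty => simp
  | cons a s ha ih => simp [Finset.inf_cons, ih]
end aux

/-- small-edges lemma. In a `(c,d)`-hypergraph, if `γ : E → [0,1]` has total weight
at most `k`, `0 < ε ≤ 1`, and every edge has weight at most `ε/(2c)`, then the number of
vertices whose total incident weight is at least `ε` is at most `d·(2k/ε)^c`. -/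
theorem stmt_2 (c d : ℕ) (hc : 1 ≤ c) (k ε : ℝ)
    {V : Type} [Fintype V] [DecidableEq V]
    (E : Finset (Finset V)) (hE : ∀ e ∈ E, e.Nonempty)
    (hcd : ∀ E' ⊆ E, E'.card = c → (E'.inf id).card ≤ d)
    (γ : Finset V → ℝ)
    (hγ0 : ∀ e ∈ E, 0 ≤ γ e) (hγ1 : ∀ e ∈ E, γ e ≤ 1)
    (hw : ∑ e ∈ E, γ e ≤ k)
    (hε0 : 0 < ε) (hε1 : ε ≤ 1)
    (hsmall : ∀ e ∈ E, γ e ≤ ε / (2 * c)) :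
    ((Finset.univ.filter fun v : V => ε ≤ ∑ e ∈ E.filter (v ∈ ·), γ e).card : ℝ)
      ≤ (d : ℝ) * (2 * k / ε) ^ c := by
  classical
  set B := Finset.univ.filter fun v : V => ε ≤ ∑ e ∈ E.filter (v ∈ ·), γ e with hB
  set N : ℝ := ∑ A ∈ E.powersetCard c, (∏ e ∈ A, γ e) * ((A.inf id).card : ℝ) with hN
  have hk0 : (0:ℝ) ≤ k := le_trans (Finset.sum_nonneg hγ0) hw
  have hc0 : (0:ℝ) < c := by exact_mod_cast hc
  set m : ℝ := ε / (2 * c) with hm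
  have hm0 : 0 < m := by positivity
  have hcm : (c : ℝ) * m = ε / 2 := by
    rw [hm]; field_simp
  -- Claim 1
  have claim1 : N = ∑ v : V, ∑ A ∈ (E.filter (v ∈ ·)).powersetCard c, ∏ e ∈ A, γ e := by
    rw [hN]
    have step : ∀ A ∈ E.powersetCard c, (∏ e ∈ A, γ e) * ((A.inf id).card : ℝ)
        = ∑ v ∈ Finset.univ, if v ∈ A.inf id then ∏ e ∈ A, γ e else 0 := by
      intro A _
      rw [Finset.sum_ite_mem, Finset.univ_inter, Finset.sum_const, nsmul_eq_mul, mul_comm]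
    rw [Finset.sum_congr rfl step, Finset.sum_comm]
    refine Finset.sum_congr rfl fun v _ => ?_
    rw [← Finset.sum_filter]
    refine Finset.sum_congr ?_ fun _ _ => rfl
    ext A
    simp only [Finset.mem_filter, Finset.mem_powersetCard, mem_inf_id]
    constructor
    · rintro ⟨⟨hAE, hcard⟩, hinf⟩
      exact ⟨fun e he => Finset.mem_filter.2 ⟨hAE he, hinf e he⟩, hcard⟩
    · rintro ⟨hAF, hcard⟩
      exact ⟨⟨fun e he => (Finset.mem_filter.1 (hAF he)).1, hcard⟩,
        fun e he => (Finset.mem_filter.1 (hAF he)).2⟩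
  -- Claim 2: per vertex in B
  have claim2 : ∀ v ∈ B, (ε / 2) ^ c
      ≤ (c ! : ℝ) * (∑ A ∈ (E.filter (v ∈ ·)).powersetCard c, ∏ e ∈ A, γ e) := by
    intro v hv
    have hvS : ε ≤ ∑ e ∈ E.filter (v ∈ ·), γ e := (Finset.mem_filter.1 hv).2
    set F := E.filter (v ∈ ·) with hF
    set S := ∑ e ∈ F, γ e with hS
    have hsub : F ⊆ E := Finset.filter_subset _ _
    have him : ∀ i : ℕ, i < c → (i : ℝ) * m ≤ ε / 2 - m := by
      intro i hi
      have h1 : (i : ℝ) ≤ (c : ℝ) - 1 := by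
        have : (i : ℝ) + 1 ≤ (c : ℝ) := by exact_mod_cast hi
        linarith
      have := mul_le_mul_of_nonneg_right h1 hm0.le
      linarith [hcm]
    have hfac : ∀ i : ℕ, i < c → 0 ≤ S - i * m := by
      intro i hi; have := him i hi; linarith
    have hlow := esymm_lower c F γ m hm0.le
      (fun e he => hγ0 e (hsub he)) (fun e he => hsmall e (hsub he)) hfac
    refine le_trans ?_ hlow
    have : (ε / 2) ^ c = ∏ _i ∈ Finset.range c, (ε / 2) := by
      rw [Finset.prod_const, Finset.card_range]
    rw [this]
    refine Finset.prod_le_prod (fun _ _ => by linarith) (fun i hi => ?_)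
    have := him i (Finset.mem_range.1 hi)
    linarith
  -- Claim 3: upper bound on N
  have claim3 : (c ! : ℝ) * N ≤ (d : ℝ) * k ^ c := by
    have hNd : N ≤ (d : ℝ) * (∑ A ∈ E.powersetCard c, ∏ e ∈ A, γ e) := by
      rw [hN, Finset.mul_sum]
      refine Finset.sum_le_sum fun A hA => ?_
      obtain ⟨hAE, hcard⟩ := Finset.mem_powersetCard.1 hA
      have hprod : 0 ≤ ∏ e ∈ A, γ e := Finset.prod_nonneg fun e he => hγ0 e (hAE he)
      have hcd' : ((A.inf id).card : ℝ) ≤ (d : ℝ) := by exact_mod_cast hcd A hAE hcard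
      calc (∏ e ∈ A, γ e) * ((A.inf id).card : ℝ) ≤ (∏ e ∈ A, γ e) * d :=
            mul_le_mul_of_nonneg_left hcd' hprod
        _ = (d : ℝ) * ∏ e ∈ A, γ e := by ring
    have hup := esymm_upper c E γ hγ0
    have hSk : (∑ e ∈ E, γ e) ^ c ≤ k ^ c :=
      pow_le_pow_left₀ (Finset.sum_nonneg hγ0) hw c
    calc (c ! : ℝ) * N ≤ (c ! : ℝ) * ((d : ℝ) * (∑ A ∈ E.powersetCard c, ∏ e ∈ A, γ e)) :=
          mul_le_mul_of_nonneg_left hNd (by positivity)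
      _ = (d : ℝ) * ((c ! : ℝ) * (∑ A ∈ E.powersetCard c, ∏ e ∈ A, γ e)) := by ring
      _ ≤ (d : ℝ) * (∑ e ∈ E, γ e) ^ c := mul_le_mul_of_nonneg_left hup (by positivity)
      _ ≤ (d : ℝ) * k ^ c := mul_le_mul_of_nonneg_left hSk (by positivity)
  -- combine
  have hcount : (B.card : ℝ) * (ε / 2) ^ c ≤ (c ! : ℝ) * N := by
    have h1 : (B.card : ℝ) * (ε / 2) ^ c = ∑ _v ∈ B, (ε / 2) ^ c := by
      rw [Finset.sum_const, nsmul_eq_mul]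
    rw [h1]
    calc (∑ _v ∈ B, (ε / 2) ^ c)
        ≤ ∑ v ∈ B, (c ! : ℝ) * (∑ A ∈ (E.filter (v ∈ ·)).powersetCard c, ∏ e ∈ A, γ e) :=
          Finset.sum_le_sum claim2
      _ ≤ ∑ v : V, (c ! : ℝ) * (∑ A ∈ (E.filter (v ∈ ·)).powersetCard c, ∏ e ∈ A, γ e) := by
          refine Finset.sum_le_sum_of_subset_of_nonneg (Finset.subset_univ B)
            (fun v _ _ => ?_)
          have : 0 ≤ ∑ A ∈ (E.filter (v ∈ ·)).powersetCard c, ∏ e ∈ A, γ e :=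
            Finset.sum_nonneg fun A hA =>
              Finset.prod_nonneg fun e he =>
                hγ0 e ((Finset.filter_subset _ _) ((Finset.mem_powersetCard.1 hA).1 he))
          positivity
      _ = (c ! : ℝ) * N := by rw [claim1, Finset.mul_sum]
  have hp : (0:ℝ) < (ε / 2) ^ c := by positivity
  have hkey : (B.card : ℝ) * (ε / 2) ^ c ≤ ((d : ℝ) * (2 * k / ε) ^ c) * (ε / 2) ^ c := by
    have heq : ((d : ℝ) * (2 * k / ε) ^ c) * (ε / 2) ^ c = (d : ℝ) * k ^ c := by
      rw [mul_assoc, ← mul_pow]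
      congr 2
      field_simp
    rw [heq]
    exact le_trans hcount claim3
  exact le_of_mul_le_mul_right hkey hp
end

section
/- Let H = (V,E) be a hypergraph and γ : E → [0,1] an edge weight function, and suppose the set B(γ) of vertices covered by γ is finite of size m. Then there exists ν : E → [0,1] with weight(ν) ≤ weight(γ), B(γ) ⊆ B(ν), and |support(ν)| ≤ 2^m. -/
open scoped Classical

lemma sum_min_ge_one {α : Type*} (s : Finset α) (w : α → ℝ)
    (h0 : ∀ a ∈ s, 0 ≤ w a) (h : 1 ≤ ∑ a ∈ s, w a) :
    1 ≤ ∑ a ∈ s, min 1 (w a) := by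
  by_cases hall : ∀ a ∈ s, w a ≤ 1
  · calc 1 ≤ ∑ a ∈ s, w a := h
      _ = ∑ a ∈ s, min 1 (w a) := by
        refine Finset.sum_congr rfl fun a ha => ?_
        rw [min_eq_right (hall a ha)]
  · push_neg at hall
    obtain ⟨a, ha, hwa⟩ := hall
    have : min 1 (w a) = 1 := min_eq_left (le_of_lt hwa)
    calc (1:ℝ) = min 1 (w a) := this.symm
      _ ≤ ∑ a ∈ s, min 1 (w a) := by
        refine Finset.single_le_sum (f := fun a => min 1 (w a)) (fun b hb => ?_) ha
        exact le_min zero_le_one (h0 b hb)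

/-- If `γ : E → [0,1]` covers the (finite) set `B(γ)` of `m` vertices, then there is
`ν : E → [0,1]` with `weight(ν) ≤ weight(γ)`, `B(γ) ⊆ B(ν)`, and `|support(ν)| ≤ 2^m`. -/
theorem stmt_3 {V : Type} [Fintype V] [DecidableEq V]
    (E : Finset (Finset V)) (hE : ∀ e ∈ E, e.Nonempty)
    (γ : Finset V → ℝ)
    (hγ0 : ∀ e ∈ E, 0 ≤ γ e) (hγ1 : ∀ e ∈ E, γ e ≤ 1) (hγE : ∀ e ∉ E, γ e = 0)
    (m : ℕ)
    (hm : (Finset.univ.filter fun v : V => 1 ≤ ∑ e ∈ E.filter (v ∈ ·), γ e).card = m) :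
    ∃ ν : Finset V → ℝ,
      (∀ e ∈ E, 0 ≤ ν e ∧ ν e ≤ 1) ∧ (∀ e ∉ E, ν e = 0) ∧
      (∑ e ∈ E, ν e) ≤ (∑ e ∈ E, γ e) ∧
      (∀ v : V, 1 ≤ ∑ e ∈ E.filter (v ∈ ·), γ e → 1 ≤ ∑ e ∈ E.filter (v ∈ ·), ν e) ∧
      (E.filter fun e => ν e ≠ 0).card ≤ 2 ^ m := by
  classical
  set B : Finset V := Finset.univ.filter fun v : V => 1 ≤ ∑ e ∈ E.filter (v ∈ ·), γ e with hB
  set key : Finset V → Finset V := fun e => e ∩ B with hkey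
  set fib : Finset V → Finset (Finset V) := fun S => E.filter fun e => key e = S with hfib
  have repex : ∀ S : Finset V, (fib S).Nonempty → ∃ e, e ∈ fib S := fun S h => h
  set rep : Finset V → Finset V := fun S =>
    if h : (fib S).Nonempty then h.choose else ∅ with hrep
  have hrepmem : ∀ S, (fib S).Nonempty → rep S ∈ fib S := by
    intro S h
    simp only [hrep, dif_pos h]
    exact h.choose_spec
  set cs : Finset V → ℝ := fun S => ∑ e ∈ fib S, γ e with hcs
  set ν : Finset V → ℝ := fun e =>
    if e ∈ E ∧ e = rep (key e) then min 1 (cs (key e)) else 0 with hν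
  have hcs0 : ∀ S, 0 ≤ cs S := by
    intro S
    refine Finset.sum_nonneg fun e he => hγ0 e (Finset.mem_filter.mp he).1
  have hν0 : ∀ e, 0 ≤ ν e := by
    intro e
    simp only [hν]
    split
    · exact le_min zero_le_one (hcs0 _)
    · exact le_refl 0
  have hν1 : ∀ e, ν e ≤ 1 := by
    intro e
    simp only [hν]
    split
    · exact min_le_left _ _
    · exact zero_le_one
  -- fiber sum of ν
  have hfibsum : ∀ S, (fib S).Nonempty → ∑ e ∈ fib S, ν e = min 1 (cs S) := by
    intro S hS
    have hr := hrepmem S hS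
    rw [Finset.sum_eq_single (rep S)]
    · have h1 : rep S ∈ E := (Finset.mem_filter.mp hr).1
      have h2 : key (rep S) = S := (Finset.mem_filter.mp hr).2
      simp [hν, h2, h1]
    · intro e he hne
      have h2 : key e = S := (Finset.mem_filter.mp he).2
      simp only [hν, h2]
      rw [if_neg]
      rintro ⟨-, h⟩
      exact hne h
    · intro h; exact absurd hr h
  refine ⟨ν, fun e he => ⟨hν0 e, hν1 e⟩, fun e he => ?_, ?_, ?_, ?_⟩
  · simp only [hν]
    rw [if_neg]; rintro ⟨h, -⟩; exact he h
  · -- total weight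
    rw [← Finset.sum_fiberwise_of_maps_to (g := key) (t := E.image key)
        (fun e he => Finset.mem_image_of_mem key he) ν,
        ← Finset.sum_fiberwise_of_maps_to (g := key) (t := E.image key)
        (fun e he => Finset.mem_image_of_mem key he) γ]
    refine Finset.sum_le_sum fun S hS => ?_
    obtain ⟨e, heE, heS⟩ := Finset.mem_image.mp hS
    have hne : (fib S).Nonempty := ⟨e, Finset.mem_filter.mpr ⟨heE, heS⟩⟩
    calc ∑ e ∈ E.filter (fun e => key e = S), ν e = min 1 (cs S) := hfibsum S hne
      _ ≤ cs S := min_le_right _ _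
  · -- coverage
    intro v hv
    have hvB : v ∈ B := by
      rw [hB]; exact Finset.mem_filter.mpr ⟨Finset.mem_univ v, hv⟩
    set T : Finset (Finset V) := E.filter (v ∈ ·) with hT
    -- fibers of key within T agree with fibers within E
    have hTfib : ∀ S, v ∈ S → T.filter (fun e => key e = S) = fib S := by
      intro S hvS
      ext e
      simp only [hT, hfib, Finset.mem_filter, and_assoc]
      constructor
      · rintro ⟨h1, h2, h3⟩; exact ⟨h1, h3⟩
      · rintro ⟨h1, h3⟩
        refine ⟨h1, ?_, h3⟩
        have : v ∈ key e := h3 ▸ hvS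
        exact (Finset.mem_inter.mp this).1
    have hkeyv : ∀ e ∈ T, v ∈ key e := by
      intro e he
      have := Finset.mem_filter.mp he
      exact Finset.mem_inter.mpr ⟨this.2, hvB⟩
    rw [← Finset.sum_fiberwise_of_maps_to (g := key) (t := T.image key)
        (fun e he => Finset.mem_image_of_mem key he) ν]
    have hγsum : ∑ e ∈ T, γ e = ∑ S ∈ T.image key, cs S := by
      rw [← Finset.sum_fiberwise_of_maps_to (g := key) (t := T.image key)
        (fun e he => Finset.mem_image_of_mem key he) γ]
      refine Finset.sum_congr rfl fun S hS => ?_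
      obtain ⟨e, heT, heS⟩ := Finset.mem_image.mp hS
      rw [hTfib S (heS ▸ hkeyv e heT)]
    have h1 : 1 ≤ ∑ S ∈ T.image key, cs S := hγsum ▸ hv
    have := sum_min_ge_one (T.image key) cs (fun S _ => hcs0 S) h1
    refine le_trans this (le_of_eq ?_)
    refine Finset.sum_congr rfl fun S hS => ?_
    obtain ⟨e, heT, heS⟩ := Finset.mem_image.mp hS
    have hvS : v ∈ S := heS ▸ hkeyv e heT
    rw [hTfib S hvS]
    exact (hfibsum S ⟨e, (hTfib S hvS) ▸ Finset.mem_filter.mpr ⟨heT, heS⟩⟩).symm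
  · -- support card
    refine le_trans (Finset.card_le_card_of_injOn (t := B.powerset) key (fun e he => ?_) ?_) ?_
    · exact Finset.mem_powerset.mpr (Finset.inter_subset_right)
    · intro e he f hf hef
      have he' := Finset.mem_filter.mp he
      have hf' := Finset.mem_filter.mp hf
      have hre : e = rep (key e) := by
        by_contra h
        exact he'.2 (by simp only [hν]; rw [if_neg]; rintro ⟨-, h'⟩; exact h h')
      have hrf : f = rep (key f) := by
        by_contra h
        exact hf'.2 (by simp only [hν]; rw [if_neg]; rintro ⟨-, h'⟩; exact h h')
      rw [hre, hrf, hef]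
    · rw [Finset.card_powerset, hm]
end

section
/- In the family of hypergraphs H_n (n ≥ 2) with vertices v_0,...,v_n and edges e_0 = {v_1,...,v_n} and e_i = {v_0, v_i} for i = 1,...,n, the fractional edge cover number of H_n equals 2 − 1/n. -/
open scoped Classical

def Hedges (n : ℕ) : Finset (Finset (Fin (n + 1))) :=
  insert (Finset.univ.erase 0)
    ((Finset.univ.erase 0).image fun i => ({0, i} : Finset (Fin (n + 1))))

def E0fn (n : ℕ) : Finset (Fin (n + 1)) := Finset.univ.erase 0

def fpair (n : ℕ) (i : Fin (n + 1)) : Finset (Fin (n + 1)) := {0, i}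

lemma Hedges_eq (n : ℕ) : Hedges n = insert (E0fn n) ((E0fn n).image (fpair n)) := rfl

lemma E0_ne_fj (n : ℕ) (j : Fin (n+1)) : E0fn n ≠ fpair n j := by
  intro h
  have : (0 : Fin (n+1)) ∈ E0fn n := h ▸ (by simp [fpair])
  simp [E0fn] at this

lemma fj_mem (n : ℕ) (j : Fin (n+1)) (hj : j ≠ 0) : fpair n j ∈ Hedges n := by
  rw [Hedges_eq]
  exact Finset.mem_insert_of_mem (Finset.mem_image_of_mem _
    (Finset.mem_erase.mpr ⟨hj, Finset.mem_univ j⟩))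

lemma E0_not_mem (n : ℕ) : E0fn n ∉ (E0fn n).image (fpair n) := by
  intro h
  obtain ⟨i, _, hi⟩ := Finset.mem_image.mp h
  exact E0_ne_fj n i hi.symm

lemma f_inj (n : ℕ) : Set.InjOn (fpair n) (E0fn n) := by
  intro i hi j hj h
  have : j ∈ fpair n i := h ▸ (by simp [fpair])
  simp [fpair] at this
  rcases this with h0 | h
  · exact absurd h0 (Finset.ne_of_mem_erase hj)
  · exact h.symm

lemma card_E0 (n : ℕ) : (E0fn n).card = n := by
  rw [E0fn, Finset.card_erase_of_mem (Finset.mem_univ 0), Finset.card_univ, Fintype.card_fin]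
  omega

lemma filter_zero (n : ℕ) :
    (Hedges n).filter ((0 : Fin (n+1)) ∈ ·) = (E0fn n).image (fpair n) := by
  rw [Hedges_eq, Finset.filter_insert]
  rw [if_neg (by simp [E0fn])]
  rw [Finset.filter_image]
  congr 1
  apply Finset.filter_true_of_mem
  intro i _
  simp [fpair]

lemma filter_ne (n : ℕ) (j : Fin (n+1)) (hj : j ≠ 0) :
    (Hedges n).filter (j ∈ ·) = insert (E0fn n) {fpair n j} := by
  rw [Hedges_eq, Finset.filter_insert]
  have hjE : j ∈ E0fn n := Finset.mem_erase.mpr ⟨hj, Finset.mem_univ j⟩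
  rw [if_pos hjE]
  congr 1
  rw [Finset.filter_image]
  have : (E0fn n).filter (fun i => j ∈ fpair n i) = {j} := by
    ext i
    simp only [Finset.mem_filter, Finset.mem_singleton]
    constructor
    · rintro ⟨hi, hmem⟩
      have : j = 0 ∨ j = i := by simpa [fpair] using hmem
      rcases this with h | h
      · exact absurd h hj
      · exact h.symm
    · rintro rfl
      exact ⟨Finset.mem_erase.mpr ⟨hj, Finset.mem_univ _⟩, by simp [fpair]⟩
  rw [this, Finset.image_singleton]

lemma sum_Hedges (n : ℕ) (γ : Finset (Fin (n+1)) → ℝ) :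
    ∑ e ∈ Hedges n, γ e = γ (E0fn n) + ∑ i ∈ E0fn n, γ (fpair n i) := by
  rw [Hedges_eq, Finset.sum_insert (E0_not_mem n),
    Finset.sum_image (fun a ha b hb => f_inj n ha hb)]

lemma sum_filter_zero (n : ℕ) (γ : Finset (Fin (n+1)) → ℝ) :
    ∑ e ∈ (Hedges n).filter ((0 : Fin (n+1)) ∈ ·), γ e = ∑ i ∈ E0fn n, γ (fpair n i) := by
  rw [filter_zero, Finset.sum_image (fun a ha b hb => f_inj n ha hb)]

lemma sum_filter_ne (n : ℕ) (γ : Finset (Fin (n+1)) → ℝ) (j : Fin (n+1)) (hj : j ≠ 0) :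
    ∑ e ∈ (Hedges n).filter (j ∈ ·), γ e = γ (E0fn n) + γ (fpair n j) := by
  rw [filter_ne n j hj,
    Finset.sum_insert (by simpa using E0_ne_fj n j), Finset.sum_singleton]

/-- For `n ≥ 2`, the fractional edge cover number of `H_n` equals `2 - 1/n`. -/
theorem stmt_7 (n : ℕ) (hn : 2 ≤ n) :
    IsLeast {w : ℝ |
      ∃ γ : Finset (Fin (n + 1)) → ℝ,
        (∀ e ∈ Hedges n, 0 ≤ γ e ∧ γ e ≤ 1) ∧
        (∀ e ∉ Hedges n, γ e = 0) ∧
        (∀ v : Fin (n + 1), 1 ≤ ∑ e ∈ (Hedges n).filter (v ∈ ·), γ e) ∧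
        w = ∑ e ∈ Hedges n, γ e}
      (2 - 1 / (n : ℝ)) := by
  have hnpos : (0 : ℝ) < n := by exact_mod_cast (by omega : 0 < n)
  have hn2 : (2 : ℝ) ≤ n := by exact_mod_cast hn
  have hinv0 : (0:ℝ) ≤ 1/n := by positivity
  have hinv1 : 1/(n:ℝ) ≤ 1 := by rw [div_le_one hnpos]; linarith
  set γ : Finset (Fin (n + 1)) → ℝ :=
    fun e => if e = E0fn n then 1 - 1/n else if e ∈ Hedges n then 1/n else 0 with hγ
  have hγE0 : γ (E0fn n) = 1 - 1/n := by rw [hγ]; simp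
  have hγf : ∀ j : Fin (n+1), j ≠ 0 → γ (fpair n j) = 1/n := by
    intro j hj
    rw [hγ]
    simp only
    rw [if_neg (fun h => E0_ne_fj n j h.symm), if_pos (fj_mem n j hj)]
  constructor
  · refine ⟨γ, ?_, ?_, ?_, ?_⟩
    · intro e he
      rw [hγ]; simp only
      by_cases h1 : e = E0fn n
      · rw [if_pos h1]; constructor <;> linarith
      · rw [if_neg h1, if_pos he]; constructor <;> linarith
    · intro e he
      rw [hγ]; simp only
      rw [if_neg (fun h => he (by rw [h, Hedges_eq]; exact Finset.mem_insert_self _ _)), if_neg he]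
    · intro v
      by_cases hv : v = 0
      · subst hv
        rw [sum_filter_zero]
        have heval : ∀ i ∈ E0fn n, γ (fpair n i) = 1/(n:ℝ) := fun i hi =>
          hγf i (Finset.ne_of_mem_erase hi)
        rw [Finset.sum_congr rfl heval, Finset.sum_const, card_E0, nsmul_eq_mul,
          mul_one_div, div_self hnpos.ne']
      · rw [sum_filter_ne n γ v hv, hγE0, hγf v hv]
        linarith
    · rw [sum_Hedges]
      have heval : ∀ i ∈ E0fn n, γ (fpair n i) = 1/(n:ℝ) := fun i hi =>
        hγf i (Finset.ne_of_mem_erase hi)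
      rw [hγE0, Finset.sum_congr rfl heval, Finset.sum_const, card_E0, nsmul_eq_mul,
        mul_one_div, div_self hnpos.ne']
      ring
  · rintro w ⟨δ, hbd, _, hcov, rfl⟩
    rw [sum_Hedges]
    have h0 : 1 ≤ ∑ i ∈ E0fn n, δ (fpair n i) := by
      have := hcov 0
      rwa [sum_filter_zero] at this
    have hj : ∀ j ∈ E0fn n, 1 ≤ δ (E0fn n) + δ (fpair n j) := by
      intro j hjE
      have := hcov j
      rwa [sum_filter_ne n δ j (Finset.ne_of_mem_erase hjE)] at this
    have hsumj : (n : ℝ) ≤ n * δ (E0fn n) + ∑ i ∈ E0fn n, δ (fpair n i) := by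
      have := Finset.sum_le_sum hj
      rw [Finset.sum_const, card_E0, nsmul_eq_mul, mul_one, Finset.sum_add_distrib,
        Finset.sum_const, card_E0, nsmul_eq_mul] at this
      linarith
    set S := ∑ i ∈ E0fn n, δ (fpair n i)
    rw [show (2 - 1/(n:ℝ)) = (2*n - 1)/n by field_simp, div_le_iff₀ hnpos]
    nlinarith
end

section
/- Given a well-formed pair (S,U) with S = {S_1,...,S_r} for a hypergraph H and edge weight function γ, if there is an assignment ν : E → [0,1] of weight at most k whose support has size at most ∑_i |S_i| + 2^{|U|} and which covers (⋃_i ⋂S_i) ∪ U, and whose values arise from an optimal solution of the associated linear program LP(S,U) with optimum at most k, then (S,U) is a perfect pair. More precisely: if the optimal value of LP(S,U) is at most k, then (S,U) is perfect. -/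
/-! Take an optimal solution `x` of `LP(S,U)` and truncate it at `1`. Truncation keeps every
covering constraint satisfied (a constraint either keeps all its terms or contains a term equal
to `1`), does not increase the weight, and keeps the support inside `⋃S ∪ A`, whose size is at
most `∑ |S_i| + 2^{|U|}` because distinct representatives in `A` have distinct traces on `U`. -/

open Finset

theorem Finset.le_sum_min_of_le_sum_of_subset {ι R : Type*} [AddCommMonoid R] [LinearOrder R]
    [IsOrderedAddMonoid R] {s t : Finset ι} {x : ι → R} {a : R} (hst : s ⊆ t)
    (hx : ∀ i, 0 ≤ x i) (ha : 0 ≤ a) (h : a ≤ ∑ i ∈ s, x i) :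
    a ≤ ∑ i ∈ t, min (x i) a := by
  have hs : a ≤ ∑ i ∈ s, min (x i) a := by
    by_cases hbig : ∃ i ∈ s, a ≤ x i
    · obtain ⟨i, hi, hai⟩ := hbig
      calc a = min (x i) a := (min_eq_right hai).symm
        _ ≤ ∑ i ∈ s, min (x i) a := single_le_sum (fun j _ => le_min (hx j) ha) hi
    · push Not at hbig
      rwa [sum_congr rfl fun i hi => min_eq_left (hbig i hi).le]
  exact hs.trans (sum_le_sum_of_subset_of_nonneg hst fun i _ _ => le_min (hx i) ha)

theorem Finset.card_le_two_pow_of_injOn_inter {α : Type*} [DecidableEq α]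
    {A : Finset (Finset α)} {U : Finset α} (hA : Set.InjOn (· ∩ U) A) :
    #A ≤ 2 ^ #U :=
  (card_le_card_of_injOn _ (fun _ _ => mem_powerset.2 inter_subset_right) hA).trans_eq
    (card_powerset U)

theorem Finset.card_sup_le_sum_card {α ι : Type*} [DecidableEq α] (S : Finset ι)
    (f : ι → Finset α) : #(S.sup f) ≤ ∑ i ∈ S, #(f i) := by
  rw [sup_eq_biUnion]
  exact card_biUnion_le

theorem stmt_9_general {V : Type} [DecidableEq V]
    (c : ℕ) (k : ℝ)
    (E : Finset (Finset V))
    (S : Finset (Finset (Finset V))) (U : Finset V)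
    -- well-formed pair
    (hS : ∀ Si ∈ S, Si ⊆ E ∧ Si.card ≤ c)
    -- witnessing representatives
    (A : Finset (Finset V))
    (hA1 : A ⊆ E)
    (hA4 : ∀ a ∈ A, ∀ a' ∈ A, a ∩ U = a' ∩ U → a = a')
    -- the optimal value of LP(S,U) is at most k
    (opt : ℝ)
    (hopt : IsLeast {w : ℝ |
      ∃ x : Finset V → ℝ,
        (∀ e, 0 ≤ x e) ∧ (∀ e ∉ S.sup id ∪ A, x e = 0) ∧
        (∀ Si ∈ S, 1 ≤ ∑ e ∈ Si, x e) ∧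
        (∀ u ∈ U, 1 ≤ ∑ e ∈ (S.sup id ∪ A).filter (u ∈ ·), x e) ∧
        w = ∑ e ∈ S.sup id ∪ A, x e} opt)
    (hoptk : opt ≤ k) :
    -- (S,U) is a perfect pair
    ∃ ν : Finset V → ℝ,
      (∀ e, 0 ≤ ν e ∧ ν e ≤ 1) ∧ (∀ e ∉ E, ν e = 0) ∧
      (∑ e ∈ E, ν e) ≤ k ∧
      (E.filter fun e => ν e ≠ 0).card ≤ (∑ Si ∈ S, Si.card) + 2 ^ U.card ∧
      (∀ u ∈ U, 1 ≤ ∑ e ∈ E.filter (u ∈ ·), ν e) ∧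
      (∀ Si ∈ S, ∀ v : V, (∀ e ∈ Si, v ∈ e) → 1 ≤ ∑ e ∈ E.filter (v ∈ ·), ν e) := by
  obtain ⟨⟨x, hx0, hxT, hxS, hxU, rfl⟩, -⟩ := hopt
  set T := S.sup id ∪ A
  have hTE : T ⊆ E := union_subset (Finset.sup_le fun Si hSi => (hS Si hSi).1) hA1
  have hνT : ∀ e ∉ T, min (x e) 1 = 0 := fun e he => by simp [hxT e he]
  refine ⟨fun e => min (x e) 1, fun e => ⟨le_min (hx0 e) zero_le_one, min_le_right _ _⟩,
    fun e he => hνT e fun h => he (hTE h), ?_, ?_, ?_, ?_⟩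
  · calc ∑ e ∈ E, min (x e) 1 = ∑ e ∈ T, min (x e) 1 :=
          (sum_subset hTE fun e _ he => hνT e he).symm
      _ ≤ ∑ e ∈ T, x e := sum_le_sum fun e _ => min_le_left _ _
      _ ≤ k := hoptk
  · calc #(E.filter fun e => min (x e) 1 ≠ 0) ≤ #T :=
          card_le_card fun e he => by_contra fun h => (mem_filter.1 he).2 (hνT e h)
      _ ≤ #(S.sup id) + #A := card_union_le _ _
      _ ≤ ∑ Si ∈ S, #Si + 2 ^ #U :=
          add_le_add (card_sup_le_sum_card S id) (card_le_two_pow_of_injOn_inter hA4)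
  · exact fun u hu => le_sum_min_of_le_sum_of_subset (filter_subset_filter _ hTE) hx0
      zero_le_one (hxU u hu)
  · exact fun Si hSi v hv => le_sum_min_of_le_sum_of_subset
      (fun e he => mem_filter.2 ⟨(hS Si hSi).1 he, hv e he⟩) hx0 zero_le_one (hxS Si hSi)

/-- Let `(S,U)` be a well-formed pair for a hypergraph `H = (V,E)` and edge weight
function `γ`, with a set `A` of witnessing representatives (one representative edge per
nonempty working subset of `U`). If the optimal value of the linear program `LP(S,U)` is at
most `k`, then `(S,U)` is a perfect pair: there is `ν : E → [0,1]` of weight at most `k`, with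
support of size at most `n(S,U) = ∑_i |S_i| + 2^{|U|}`, covering `(⋃_i ⋂ S_i) ∪ U`. -/
theorem stmt_9 {V : Type} [Fintype V] [DecidableEq V]
    (c : ℕ) (k : ℝ)
    (E : Finset (Finset V)) (hE : ∀ e ∈ E, e.Nonempty)
    (γ : Finset V → ℝ)
    (hγ : ∀ e ∈ E, 0 ≤ γ e ∧ γ e ≤ 1) (hγE : ∀ e ∉ E, γ e = 0)
    (S : Finset (Finset (Finset V))) (U : Finset V)
    (B : Finset V)
    (hB : B = Finset.univ.filter fun v : V => 1 ≤ ∑ e ∈ E.filter (v ∈ ·), γ e)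
    -- well-formed pair
    (hU : U ⊆ B)
    (hS : ∀ Si ∈ S, Si ⊆ E ∧ Si.card ≤ c)
    (hcover : ∀ v ∈ B, v ∉ U → ∃ Si ∈ S, ∀ e ∈ Si, v ∈ e)
    -- witnessing representatives
    (A : Finset (Finset V))
    (hA1 : A ⊆ E)
    (hA2 : ∀ a ∈ A, a ∉ S.sup id ∧ (a ∩ U).Nonempty)
    (hA3 : ∀ e ∈ E, e ∉ S.sup id → (e ∩ U).Nonempty → ∃ a ∈ A, a ∩ U = e ∩ U)
    (hA4 : ∀ a ∈ A, ∀ a' ∈ A, a ∩ U = a' ∩ U → a = a')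
    -- the optimal value of LP(S,U) is at most k
    (opt : ℝ)
    (hopt : IsLeast {w : ℝ |
      ∃ x : Finset V → ℝ,
        (∀ e, 0 ≤ x e) ∧ (∀ e ∉ S.sup id ∪ A, x e = 0) ∧
        (∀ Si ∈ S, 1 ≤ ∑ e ∈ Si, x e) ∧
        (∀ u ∈ U, 1 ≤ ∑ e ∈ (S.sup id ∪ A).filter (u ∈ ·), x e) ∧
        w = ∑ e ∈ S.sup id ∪ A, x e} opt)
    (hoptk : opt ≤ k) :
    -- (S,U) is a perfect pair
    ∃ ν : Finset V → ℝ,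
      (∀ e, 0 ≤ ν e ∧ ν e ≤ 1) ∧ (∀ e ∉ E, ν e = 0) ∧
      (∑ e ∈ E, ν e) ≤ k ∧
      (E.filter fun e => ν e ≠ 0).card ≤ (∑ Si ∈ S, Si.card) + 2 ^ U.card ∧
      (∀ u ∈ U, 1 ≤ ∑ e ∈ E.filter (u ∈ ·), ν e) ∧
      (∀ Si ∈ S, ∀ v : V, (∀ e ∈ Si, v ∈ e) → 1 ≤ ∑ e ∈ E.filter (v ∈ ·), ν e) :=
  stmt_9_general c k E S U hS A hA1 hA4 opt hopt hoptk
end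

section
/- Let (S,U) be a well-formed pair for hypergraph H with edge weight γ. Let S* = {S ∈ S : γ(S) < 1}, where γ(S) = ∑_{e ∈ S} γ(e). Then the optimal value of the linear program LP(S,U) is at most weight(γ) + ∑_{S ∈ S*} (1 − γ(S)). -/
/-!
Raise every edge of `⋃ S` from `γ(e)` by a charge: each deficient `Sᵢ ∈ S*` puts its deficit
`1 - γ(Sᵢ)` on one chosen edge of itself, so every `Sᵢ`-constraint holds and the charges cost
`∑_{S*} (1 - γ(Sᵢ))`. Every edge outside `⋃ S` hands its weight to the representative with the
same trace on `U`; a vertex `u ∈ U` lies in an edge iff it lies in its trace, so each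
`u`-constraint keeps at least the weight `∑_{e ∋ u} γ(e) ≥ 1` it had, while distinct
representatives receive weight from disjoint sets of edges, so the total stays below
`weight(γ)` plus the charges.
-/

open Finset

section Charge

variable {α : Type*} [DecidableEq α] (S : Finset (Finset α)) (pick : Finset α → α)
  (d : Finset α → ℝ)

noncomputable def charge (a : α) : ℝ := ∑ s ∈ S, if pick s = a then d s else 0

variable {S d}

theorem charge_nonneg (hd : ∀ s ∈ S, 0 ≤ d s) (a : α) : 0 ≤ charge S pick d a :=
  sum_nonneg fun s hs => ite_nonneg (hd s hs) le_rfl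

theorem le_sum_charge (hd : ∀ s ∈ S, 0 ≤ d s) {s : Finset α} (hs : s ∈ S) (hpick : pick s ∈ s) :
    d s ≤ ∑ a ∈ s, charge S pick d a :=
  calc d s = if pick s = pick s then d s else 0 := (if_pos rfl).symm
    _ ≤ charge S pick d (pick s) :=
        single_le_sum (f := fun t => if pick t = pick s then d t else 0)
          (fun t ht => ite_nonneg (hd t ht) le_rfl) hs
    _ ≤ ∑ a ∈ s, charge S pick d a :=
        single_le_sum (fun a _ => charge_nonneg pick hd a) hpick

theorem sum_charge_of_sup_subset (hpick : ∀ s ∈ S, pick s ∈ s) {T : Finset α}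
    (hT : S.sup id ⊆ T) : ∑ a ∈ T, charge S pick d a = ∑ s ∈ S, d s := by
  unfold charge
  rw [sum_comm]
  refine sum_congr rfl fun s hs => ?_
  rw [sum_ite_eq, if_pos (hT (le_sup (f := id) hs (hpick s hs)))]

end Charge

section Fiberwise

variable {β κ M : Type*} [DecidableEq κ] (t : β → κ) (F A : Finset β)

theorem sum_fiberwise_of_injOn [AddCommMonoid M] (g : β → M) (hA : Set.InjOn t A) :
    ∑ a ∈ A, ∑ f ∈ F with t f = t a, g f = ∑ f ∈ F with t f ∈ A.image t, g f := by
  rw [← sum_fiberwise_eq_sum_filter, sum_image hA]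

variable {g : β → ℝ}

theorem sum_fiberwise_le_sum (hg : ∀ f ∈ F, 0 ≤ g f) (hA : Set.InjOn t A) :
    ∑ a ∈ A, ∑ f ∈ F with t f = t a, g f ≤ ∑ f ∈ F, g f := by
  rw [sum_fiberwise_of_injOn t F A g hA]
  exact sum_le_sum_of_subset_of_nonneg (filter_subset _ _) fun f hf _ => hg f hf

theorem sum_filter_le_sum_fiberwise (hg : ∀ f ∈ F, 0 ≤ g f) (hA : Set.InjOn t A)
    (P : β → Prop) [DecidablePred P]
    (hrep : ∀ f ∈ F, P f → ∃ a ∈ A, P a ∧ t a = t f) :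
    ∑ f ∈ F with P f, g f ≤ ∑ a ∈ A with P a, ∑ f ∈ F with t f = t a, g f := by
  rw [sum_fiberwise_of_injOn t F _ g (hA.mono (filter_subset _ _))]
  refine sum_le_sum_of_subset_of_nonneg (fun f hf => ?_) fun f hf _ => hg f (mem_filter.1 hf).1
  obtain ⟨hfF, hPf⟩ := mem_filter.1 hf
  obtain ⟨a, haA, hPa, hta⟩ := hrep f hfF hPf
  exact mem_filter.2 ⟨hfF, mem_image.2 ⟨a, mem_filter.2 ⟨haA, hPa⟩, hta⟩⟩

end Fiberwise

section LPPoint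

variable {V : Type*} [DecidableEq V] (E : Finset (Finset V)) (S : Finset (Finset (Finset V)))
  (U : Finset V) (A : Finset (Finset V)) (γ b : Finset V → ℝ)

noncomputable def lpPoint (e : Finset V) : ℝ :=
  if e ∈ S.sup id then γ e + b e
  else if e ∈ A then ∑ f ∈ E \ S.sup id with f ∩ U = e ∩ U, γ f else 0

variable {E S U A γ b}

theorem lpPoint_of_mem_sup {e : Finset V} (he : e ∈ S.sup id) :
    lpPoint E S U A γ b e = γ e + b e :=
  if_pos he

theorem lpPoint_nonneg (hγ : ∀ e ∈ E, 0 ≤ γ e) (hb : ∀ e, 0 ≤ b e) (hsup : S.sup id ⊆ E)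
    (e : Finset V) : 0 ≤ lpPoint E S U A γ b e := by
  unfold lpPoint
  split_ifs with hS
  · exact add_nonneg (hγ e (hsup hS)) (hb e)
  · exact sum_nonneg fun f hf => hγ f (sdiff_subset (mem_filter.1 hf).1)
  · exact le_rfl

theorem lpPoint_eq_zero {e : Finset V} (he : e ∉ S.sup id ∪ A) : lpPoint E S U A γ b e = 0 := by
  rw [mem_union, not_or] at he
  simp [lpPoint, he.1, he.2]

theorem sum_lpPoint_union (hA : Disjoint (S.sup id) A) {T A' : Finset (Finset V)}
    (hT : T ⊆ S.sup id) (hA' : A' ⊆ A) :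
    ∑ e ∈ T ∪ A', lpPoint E S U A γ b e =
      ∑ e ∈ T, (γ e + b e) + ∑ a ∈ A', ∑ f ∈ E \ S.sup id with f ∩ U = a ∩ U, γ f := by
  rw [sum_union (hA.mono hT hA')]
  congr 1 <;> refine sum_congr rfl fun e he => ?_
  · exact lpPoint_of_mem_sup (hT he)
  · simp [lpPoint, hA' he, disjoint_right.1 hA (hA' he)]

theorem one_le_sum_lpPoint_of_mem (hb : ∀ Si ∈ S, 1 - ∑ e ∈ Si, γ e ≤ ∑ e ∈ Si, b e)
    {Si : Finset (Finset V)} (hSi : Si ∈ S) : 1 ≤ ∑ e ∈ Si, lpPoint E S U A γ b e := by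
  have hsub : Si ⊆ S.sup id := le_sup (f := id) hSi
  rw [sum_congr rfl fun e he => lpPoint_of_mem_sup (hsub he), sum_add_distrib]
  linarith [hb Si hSi]

theorem one_le_sum_filter_lpPoint (hγ : ∀ e ∈ E, 0 ≤ γ e) (hb : ∀ e, 0 ≤ b e)
    (hsup : S.sup id ⊆ E) (hA : Disjoint (S.sup id) A) (hinj : Set.InjOn (· ∩ U) A)
    (hrep : ∀ e ∈ E, e ∉ S.sup id → (e ∩ U).Nonempty → ∃ a ∈ A, a ∩ U = e ∩ U)
    {u : V} (hu : u ∈ U) (hdeg : 1 ≤ ∑ e ∈ E with u ∈ e, γ e) :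
    1 ≤ ∑ e ∈ S.sup id ∪ A with u ∈ e, lpPoint E S U A γ b e := by
  rw [filter_union, sum_lpPoint_union hA (filter_subset _ _) (filter_subset _ _)]
  have hin : ∑ e ∈ S.sup id with u ∈ e, γ e ≤ ∑ e ∈ S.sup id with u ∈ e, (γ e + b e) :=
    sum_le_sum fun e _ => le_add_of_nonneg_right (hb e)
  have hout : ∑ e ∈ E \ S.sup id with u ∈ e, γ e ≤
      ∑ a ∈ A with u ∈ a, ∑ f ∈ E \ S.sup id with f ∩ U = a ∩ U, γ f := by
    refine sum_filter_le_sum_fiberwise (· ∩ U) _ A (fun f hf => hγ f (sdiff_subset hf)) hinj _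
      fun f hf huf => ?_
    obtain ⟨a, ha, hau⟩ := hrep f (mem_sdiff.1 hf).1 (mem_sdiff.1 hf).2 ⟨u, mem_inter.2 ⟨huf, hu⟩⟩
    exact ⟨a, ha, (mem_inter.1 (hau ▸ mem_inter.2 ⟨huf, hu⟩ : u ∈ a ∩ U)).1, hau⟩
  have hsplit : ∑ e ∈ E with u ∈ e, γ e =
      ∑ e ∈ S.sup id with u ∈ e, γ e + ∑ e ∈ E \ S.sup id with u ∈ e, γ e := by
    simp only [sum_filter]
    rw [← sum_sdiff hsup, add_comm]
  linarith

theorem sum_lpPoint_le (hγ : ∀ e ∈ E, 0 ≤ γ e) (hsup : S.sup id ⊆ E)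
    (hA : Disjoint (S.sup id) A) (hinj : Set.InjOn (· ∩ U) A) :
    ∑ e ∈ S.sup id ∪ A, lpPoint E S U A γ b e ≤ ∑ e ∈ E, γ e + ∑ e ∈ S.sup id, b e := by
  rw [sum_lpPoint_union hA subset_rfl subset_rfl, sum_add_distrib, ← sum_sdiff hsup]
  linarith [sum_fiberwise_le_sum (· ∩ U) (E \ S.sup id) A (fun f hf => hγ f (sdiff_subset hf))
    hinj]

end LPPoint

theorem stmt_10_general {V : Type} [Fintype V] [DecidableEq V]
    (c : ℕ)
    (E : Finset (Finset V))
    (γ : Finset V → ℝ)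
    (hγ : ∀ e ∈ E, 0 ≤ γ e ∧ γ e ≤ 1)
    (S : Finset (Finset (Finset V))) (U : Finset V)
    (B : Finset V)
    (hB : B = Finset.univ.filter fun v : V => 1 ≤ ∑ e ∈ E.filter (v ∈ ·), γ e)
    (hU : U ⊆ B)
    (hS : ∀ Si ∈ S, Si ⊆ E ∧ Si.card ≤ c)
    (A : Finset (Finset V))
    (hA2 : ∀ a ∈ A, a ∉ S.sup id ∧ (a ∩ U).Nonempty)
    (hA3 : ∀ e ∈ E, e ∉ S.sup id → (e ∩ U).Nonempty → ∃ a ∈ A, a ∩ U = e ∩ U)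
    (hA4 : ∀ a ∈ A, ∀ a' ∈ A, a ∩ U = a' ∩ U → a = a')
    (opt : ℝ)
    (hopt : IsGLB {w : ℝ |
      ∃ x : Finset V → ℝ,
        (∀ e, 0 ≤ x e) ∧ (∀ e ∉ S.sup id ∪ A, x e = 0) ∧
        (∀ Si ∈ S, 1 ≤ ∑ e ∈ Si, x e) ∧
        (∀ u ∈ U, 1 ≤ ∑ e ∈ (S.sup id ∪ A).filter (u ∈ ·), x e) ∧
        w = ∑ e ∈ S.sup id ∪ A, x e} opt) :
    opt ≤ (∑ e ∈ E, γ e)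
      + ∑ Si ∈ S.filter (fun Si => ∑ e ∈ Si, γ e < 1), (1 - ∑ e ∈ Si, γ e) := by
  obtain ⟨-, x, -, -, hx, -⟩ := hopt.nonempty
  have hne : ∀ Si ∈ S, Si.Nonempty := fun Si hSi =>
    nonempty_of_sum_ne_zero (zero_lt_one.trans_le (hx Si hSi)).ne'
  choose! pick hpick using hne
  have hγ0 : ∀ e ∈ E, 0 ≤ γ e := fun e he => (hγ e he).1
  have hsup : S.sup id ⊆ E := Finset.sup_le fun Si hSi => (hS Si hSi).1
  have hA : Disjoint (S.sup id) A := disjoint_right.2 fun a ha => (hA2 a ha).1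
  have hinj : Set.InjOn (· ∩ U) A := hA4
  set d : Finset (Finset V) → ℝ := fun Si => if ∑ e ∈ Si, γ e < 1 then 1 - ∑ e ∈ Si, γ e else 0
  have hd : ∀ Si ∈ S, 0 ≤ d Si := fun Si _ => by dsimp only [d]; split_ifs <;> linarith
  have hdemand (Si) (hSi : Si ∈ S) : 1 - ∑ e ∈ Si, γ e ≤ ∑ e ∈ Si, charge S pick d e :=
    (by dsimp only [d]; split_ifs <;> linarith : 1 - _ ≤ d Si).trans
      (le_sum_charge pick hd hSi (hpick Si hSi))
  have hdeg (u) (hu : u ∈ U) : 1 ≤ ∑ e ∈ E with u ∈ e, γ e := by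
    simpa [hB] using hU hu
  calc opt ≤ ∑ e ∈ S.sup id ∪ A, lpPoint E S U A γ (charge S pick d) e :=
        hopt.1 ⟨_, lpPoint_nonneg hγ0 (charge_nonneg pick hd) hsup, fun _ => lpPoint_eq_zero,
          fun _ => one_le_sum_lpPoint_of_mem hdemand,
          fun u hu => one_le_sum_filter_lpPoint hγ0 (charge_nonneg pick hd) hsup hA hinj hA3 hu
            (hdeg u hu), rfl⟩
    _ ≤ ∑ e ∈ E, γ e + ∑ e ∈ S.sup id, charge S pick d e := sum_lpPoint_le hγ0 hsup hA hinj
    _ = _ := by rw [sum_charge_of_sup_subset pick hpick subset_rfl, sum_filter]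

/-- Let `(S,U)` be a well-formed pair for a hypergraph `H = (V,E)` with edge
weight function `γ`, with a set `A` of witnessing representatives. Let
`S* = {Si ∈ S : γ(Si) < 1}`. Then the optimal value of `LP(S,U)` is at most
`weight(γ) + ∑_{Si ∈ S*} (1 - γ(Si))`. -/
theorem stmt_10 {V : Type} [Fintype V] [DecidableEq V]
    (c : ℕ)
    (E : Finset (Finset V)) (hE : ∀ e ∈ E, e.Nonempty)
    (γ : Finset V → ℝ)
    (hγ : ∀ e ∈ E, 0 ≤ γ e ∧ γ e ≤ 1) (hγE : ∀ e ∉ E, γ e = 0)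
    (S : Finset (Finset (Finset V))) (U : Finset V)
    (B : Finset V)
    (hB : B = Finset.univ.filter fun v : V => 1 ≤ ∑ e ∈ E.filter (v ∈ ·), γ e)
    (hU : U ⊆ B)
    (hS : ∀ Si ∈ S, Si ⊆ E ∧ Si.card ≤ c)
    (hcover : ∀ v ∈ B, v ∉ U → ∃ Si ∈ S, ∀ e ∈ Si, v ∈ e)
    (A : Finset (Finset V))
    (hA1 : A ⊆ E)
    (hA2 : ∀ a ∈ A, a ∉ S.sup id ∧ (a ∩ U).Nonempty)
    (hA3 : ∀ e ∈ E, e ∉ S.sup id → (e ∩ U).Nonempty → ∃ a ∈ A, a ∩ U = e ∩ U)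
    (hA4 : ∀ a ∈ A, ∀ a' ∈ A, a ∩ U = a' ∩ U → a = a')
    (opt : ℝ)
    (hopt : IsGLB {w : ℝ |
      ∃ x : Finset V → ℝ,
        (∀ e, 0 ≤ x e) ∧ (∀ e ∉ S.sup id ∪ A, x e = 0) ∧
        (∀ Si ∈ S, 1 ≤ ∑ e ∈ Si, x e) ∧
        (∀ u ∈ U, 1 ≤ ∑ e ∈ (S.sup id ∪ A).filter (u ∈ ·), x e) ∧
        w = ∑ e ∈ S.sup id ∪ A, x e} opt) :
    opt ≤ (∑ e ∈ E, γ e)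
      + ∑ Si ∈ S.filter (fun Si => ∑ e ∈ Si, γ e < 1), (1 - ∑ e ∈ Si, γ e) :=
  stmt_10_general c E γ hγ S U B hB hU hS A hA2 hA3 hA4 opt hopt
end

section
/- Let (S,U) be a well-formed pair with weight(γ) ≤ k but whose linear program LP(S,U) has optimal value strictly greater than k, and let n = n(S,U). Then there exists S* ∈ S with 1 − γ(S*) > 1/(D(n,k)·|S|), where D(n,k) is the gap constant for unary LPs with at most n variables. In particular the set {S ∈ S : γ(S) < 1} is nonempty. -/
open scoped Classical

noncomputable def phiAux {V : Type} [DecidableEq V]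
    (Ssup A : Finset (Finset V)) (U : Finset V) (e : Finset V) : Finset V :=
  if e ∈ Ssup then e
  else if h : ∃ a ∈ A, a ∩ U = e ∩ U then h.choose else e

lemma phiAux_of_mem {V : Type} [DecidableEq V] {Ssup A : Finset (Finset V)} {U : Finset V}
    {e : Finset V} (h : e ∈ Ssup) : phiAux Ssup A U e = e := if_pos h

lemma phiAux_of_notMem {V : Type} [DecidableEq V] {Ssup A : Finset (Finset V)} {U : Finset V}
    {e : Finset V} (h : e ∉ Ssup) (h2 : ∃ a ∈ A, a ∩ U = e ∩ U) :
    phiAux Ssup A U e ∈ A ∧ phiAux Ssup A U e ∩ U = e ∩ U := by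
  rw [phiAux, if_neg h, dif_pos h2]
  exact h2.choose_spec

noncomputable def repAux {V : Type} (T : Finset (Finset V)) : Finset V :=
  if h : T.Nonempty then h.choose else ∅

lemma repAux_mem {V : Type} {T : Finset (Finset V)} (h : T.Nonempty) : repAux T ∈ T := by
  rw [repAux, dif_pos h]; exact h.choose_spec

/-- Let `(S,U)` be a well-formed pair (with witnessing representatives `A`) with
`weight(γ) ≤ k` whose LP `LP(S,U)` has optimal value strictly greater than `k`, and let
`n = n(S,U) = ∑_i |S_i| + 2^{|U|}`. Let `D` be a gap constant for unary LPs with at most `n`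
variables (any such LP with optimum `> k` has optimum `> k + 1/D`). Then there is `S* ∈ S` with
`1 - γ(S*) > 1/(D·|S|)`; in particular `{S ∈ S : γ(S) < 1}` is nonempty. -/
theorem stmt_11 {V : Type} [Fintype V] [DecidableEq V]
    (c : ℕ) (k : ℝ)
    (E : Finset (Finset V)) (hE : ∀ e ∈ E, e.Nonempty)
    (γ : Finset V → ℝ)
    (hγ : ∀ e ∈ E, 0 ≤ γ e ∧ γ e ≤ 1) (hγE : ∀ e ∉ E, γ e = 0)
    (hweight : ∑ e ∈ E, γ e ≤ k)
    (S : Finset (Finset (Finset V))) (U : Finset V)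
    (B : Finset V)
    (hB : B = Finset.univ.filter fun v : V => 1 ≤ ∑ e ∈ E.filter (v ∈ ·), γ e)
    (hU : U ⊆ B)
    (hS : ∀ Si ∈ S, Si ⊆ E ∧ Si.card ≤ c)
    (hcover : ∀ v ∈ B, v ∉ U → ∃ Si ∈ S, ∀ e ∈ Si, v ∈ e)
    (A : Finset (Finset V))
    (hA1 : A ⊆ E)
    (hA2 : ∀ a ∈ A, a ∉ S.sup id ∧ (a ∩ U).Nonempty)
    (hA3 : ∀ e ∈ E, e ∉ S.sup id → (e ∩ U).Nonempty → ∃ a ∈ A, a ∩ U = e ∩ U)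
    (hA4 : ∀ a ∈ A, ∀ a' ∈ A, a ∩ U = a' ∩ U → a = a')
    -- D is a gap constant for unary LPs with at most n(S,U) variables
    (D : ℕ)
    (hD : ∀ Vars : Finset (Finset V), Vars.card ≤ (∑ Si ∈ S, Si.card) + 2 ^ U.card →
      ∀ C : Finset (Finset (Finset V)), (∀ Co ∈ C, Co ⊆ Vars) →
      ∀ opt' : ℝ,
        IsGLB {w : ℝ | ∃ x : Finset V → ℝ, (∀ e, 0 ≤ x e) ∧
          (∀ Co ∈ C, 1 ≤ ∑ e ∈ Co, x e) ∧ w = ∑ e ∈ Vars, x e} opt' →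
        k < opt' → k + 1 / (D : ℝ) < opt')
    -- the optimum of LP(S,U) is strictly greater than k
    (opt : ℝ)
    (hopt : IsGLB {w : ℝ |
      ∃ x : Finset V → ℝ,
        (∀ e, 0 ≤ x e) ∧ (∀ e ∉ S.sup id ∪ A, x e = 0) ∧
        (∀ Si ∈ S, 1 ≤ ∑ e ∈ Si, x e) ∧
        (∀ u ∈ U, 1 ≤ ∑ e ∈ (S.sup id ∪ A).filter (u ∈ ·), x e) ∧
        w = ∑ e ∈ S.sup id ∪ A, x e} opt)
    (hoptk : k < opt) :
    ∃ Sstar ∈ S, 1 / ((D : ℝ) * (S.card : ℝ)) < 1 - ∑ e ∈ Sstar, γ e := by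
  classical
  set Vars : Finset (Finset V) := S.sup id ∪ A with hVars
  have hSisub : ∀ Si ∈ S, Si ⊆ Vars := by
    intro Si hSi
    exact (Finset.le_sup (f := id) hSi).trans Finset.subset_union_left
  -- the two forms of the LP have the same feasible values
  set C : Finset (Finset (Finset V)) :=
    S ∪ U.image (fun u => Vars.filter (u ∈ ·)) with hCdef
  have hsets : {w : ℝ | ∃ x : Finset V → ℝ, (∀ e, 0 ≤ x e) ∧
          (∀ Co ∈ C, 1 ≤ ∑ e ∈ Co, x e) ∧ w = ∑ e ∈ Vars, x e} =
      {w : ℝ |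
      ∃ x : Finset V → ℝ,
        (∀ e, 0 ≤ x e) ∧ (∀ e ∉ Vars, x e = 0) ∧
        (∀ Si ∈ S, 1 ≤ ∑ e ∈ Si, x e) ∧
        (∀ u ∈ U, 1 ≤ ∑ e ∈ Vars.filter (u ∈ ·), x e) ∧
        w = ∑ e ∈ Vars, x e} := by
    ext w
    constructor
    · rintro ⟨x, hx0, hxC, rfl⟩
      refine ⟨fun v => if v ∈ Vars then x v else 0, ?_, ?_, ?_, ?_, ?_⟩
      · intro e; dsimp only; split
        · exact hx0 e
        · exact le_rfl
      · intro e he; simp [he]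
      · intro Si hSi
        have := hxC Si (Finset.mem_union_left _ hSi)
        refine this.trans (le_of_eq ?_)
        refine Finset.sum_congr rfl fun e he => ?_
        exact (if_pos (hSisub Si hSi he)).symm
      · intro u hu
        have := hxC (Vars.filter (u ∈ ·))
          (Finset.mem_union_right _ (Finset.mem_image_of_mem _ hu))
        refine this.trans (le_of_eq ?_)
        refine Finset.sum_congr rfl fun e he => ?_
        exact (if_pos (Finset.mem_filter.1 he).1).symm
      · refine Finset.sum_congr rfl fun e he => ?_
        exact (if_pos he).symm
    · rintro ⟨x, hx0, _, hxS, hxU, rfl⟩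
      refine ⟨x, hx0, ?_, rfl⟩
      intro Co hCo
      rcases Finset.mem_union.1 hCo with h | h
      · exact hxS _ h
      · obtain ⟨u, hu, rfl⟩ := Finset.mem_image.1 h
        exact hxU u hu
  have hopt2 : IsGLB {w : ℝ | ∃ x : Finset V → ℝ, (∀ e, 0 ≤ x e) ∧
      (∀ Co ∈ C, 1 ≤ ∑ e ∈ Co, x e) ∧ w = ∑ e ∈ Vars, x e} opt := by
    rw [hsets]; exact hopt
  -- cardinality bound
  have hcard : Vars.card ≤ (∑ Si ∈ S, Si.card) + 2 ^ U.card := by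
    have h1 : (S.sup id).card ≤ ∑ Si ∈ S, Si.card := by
      rw [Finset.sup_eq_biUnion]
      exact Finset.card_biUnion_le
    have h2 : A.card ≤ 2 ^ U.card := by
      calc A.card ≤ U.powerset.card :=
            Finset.card_le_card_of_injOn (fun a => a ∩ U)
              (fun a _ => Finset.mem_powerset.2 Finset.inter_subset_right)
              (fun a ha a' ha' h => hA4 a ha a' ha' h)
        _ = 2 ^ U.card := Finset.card_powerset U
    calc Vars.card ≤ (S.sup id).card + A.card := Finset.card_union_le _ _
      _ ≤ (∑ Si ∈ S, Si.card) + 2 ^ U.card := by omega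
  have hCsub : ∀ Co ∈ C, Co ⊆ Vars := by
    intro Co hCo
    rcases Finset.mem_union.1 hCo with h | h
    · exact hSisub Co h
    · obtain ⟨u, _, rfl⟩ := Finset.mem_image.1 h
      exact Finset.filter_subset _ _
  have hgap : k + 1 / (D : ℝ) < opt := hD Vars hcard C hCsub opt hopt2 hoptk
  -- the original LP is feasible, so every Si is nonempty
  have hne : {w : ℝ |
      ∃ x : Finset V → ℝ,
        (∀ e, 0 ≤ x e) ∧ (∀ e ∉ Vars, x e = 0) ∧
        (∀ Si ∈ S, 1 ≤ ∑ e ∈ Si, x e) ∧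
        (∀ u ∈ U, 1 ≤ ∑ e ∈ Vars.filter (u ∈ ·), x e) ∧
        w = ∑ e ∈ Vars, x e}.Nonempty := by
    by_contra h
    rw [Set.not_nonempty_iff_eq_empty] at h
    have h1 : opt + 1 ∈ lowerBounds {w : ℝ |
      ∃ x : Finset V → ℝ,
        (∀ e, 0 ≤ x e) ∧ (∀ e ∉ Vars, x e = 0) ∧
        (∀ Si ∈ S, 1 ≤ ∑ e ∈ Si, x e) ∧
        (∀ u ∈ U, 1 ≤ ∑ e ∈ Vars.filter (u ∈ ·), x e) ∧
        w = ∑ e ∈ Vars, x e} := by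
      rw [h]; intro y hy; exact absurd hy (Set.notMem_empty y)
    have := hopt.2 h1
    linarith
  have hSine : ∀ Si ∈ S, Si.Nonempty := by
    obtain ⟨w0, x0, _, _, hx0S, _, _⟩ := hne
    intro Si hSi
    rcases Finset.eq_empty_or_nonempty Si with rfl | h
    · have := hx0S ∅ hSi
      simp at this
      linarith
    · exact h
  -- construct a feasible solution from γ
  set φ : Finset V → Finset V := phiAux (S.sup id) A U with hφdef
  have hφ : ∀ e ∈ E, ∀ u ∈ U, u ∈ e → φ e ∈ Vars ∧ u ∈ φ e := by
    intro e heE u huU hue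
    by_cases h : e ∈ S.sup id
    · rw [hφdef, phiAux_of_mem h]
      exact ⟨Finset.mem_union_left _ h, hue⟩
    · have hNE : (e ∩ U).Nonempty := ⟨u, Finset.mem_inter.2 ⟨hue, huU⟩⟩
      obtain ⟨hmem, hinter⟩ := phiAux_of_notMem (A := A) (U := U) h (hA3 e heE h hNE)
      refine ⟨Finset.mem_union_right _ hmem, ?_⟩
      have : u ∈ phiAux (S.sup id) A U e ∩ U := by
        rw [hinter]; exact Finset.mem_inter.2 ⟨hue, huU⟩
      exact (Finset.mem_inter.1 this).1
  set Sdef : Finset (Finset (Finset V)) := S.filter (fun Si => ∑ e ∈ Si, γ e < 1)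
    with hSdefdef
  set Δ : ℝ := ∑ Si ∈ Sdef, (1 - ∑ e ∈ Si, γ e) with hΔdef
  set gp : Finset V → ℝ := fun v => ∑ e ∈ E, if φ e = v then γ e else 0 with hgpdef
  set d : Finset V → ℝ := fun v =>
    ∑ Si ∈ Sdef, if repAux Si = v then 1 - ∑ e ∈ Si, γ e else 0 with hddef
  set x : Finset V → ℝ := fun v => gp v + d v with hxdef
  have hγ0 : ∀ e ∈ E, 0 ≤ γ e := fun e he => (hγ e he).1
  have hgp0 : ∀ v, 0 ≤ gp v := by
    intro v
    refine Finset.sum_nonneg fun e he => ?_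
    split
    · exact hγ0 e he
    · exact le_rfl
  have hd0 : ∀ v, 0 ≤ d v := by
    intro v
    refine Finset.sum_nonneg fun Si hSi => ?_
    have := (Finset.mem_filter.1 hSi).2
    split
    · linarith
    · exact le_rfl
  have hx0 : ∀ v, 0 ≤ x v := fun v => add_nonneg (hgp0 v) (hd0 v)
  -- sums of gp over any set T of variables
  have hgpsum : ∀ T : Finset (Finset V),
      ∑ v ∈ T, gp v = ∑ e ∈ E, if φ e ∈ T then γ e else 0 := by
    intro T
    rw [hgpdef]
    rw [Finset.sum_comm]
    refine Finset.sum_congr rfl fun e _ => ?_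
    simp [Finset.sum_ite_eq T (φ e) (fun _ => γ e)]
  have hdsum : ∀ T : Finset (Finset V),
      ∑ v ∈ T, d v = ∑ Si ∈ Sdef, if repAux Si ∈ T then 1 - ∑ e ∈ Si, γ e else 0 := by
    intro T
    rw [hddef]
    rw [Finset.sum_comm]
    refine Finset.sum_congr rfl fun Si _ => ?_
    simp [Finset.sum_ite_eq T (repAux Si) (fun _ => 1 - ∑ e ∈ Si, γ e)]
  have hSisupS : ∀ Si ∈ S, Si ⊆ S.sup id := fun Si hSi => Finset.le_sup (f := id) hSi
  -- Si constraints
  have hxS : ∀ Si ∈ S, 1 ≤ ∑ e ∈ Si, x e := by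
    intro Si hSi
    have hsplit : ∑ e ∈ Si, x e = (∑ e ∈ Si, gp e) + ∑ e ∈ Si, d e := by
      rw [hxdef]; exact Finset.sum_add_distrib
    have hgpge : ∑ e ∈ Si, γ e ≤ ∑ e ∈ Si, gp e := by
      refine Finset.sum_le_sum fun e he => ?_
      have heE : e ∈ E := (hS Si hSi).1 he
      have heS : e ∈ S.sup id := hSisupS Si hSi he
      have key : (if φ e = e then γ e else 0) ≤ gp e := by
        refine Finset.single_le_sum (f := fun e' => if φ e' = e then γ e' else 0)
          (fun e' he' => ?_) heE
        split
        · exact hγ0 e' he'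
        · exact le_rfl
      rwa [if_pos (by rw [hφdef]; exact phiAux_of_mem heS)] at key
    have hdge0 : 0 ≤ ∑ e ∈ Si, d e := Finset.sum_nonneg fun e _ => hd0 e
    by_cases hdf : ∑ e ∈ Si, γ e < 1
    · have hSidef : Si ∈ Sdef := Finset.mem_filter.2 ⟨hSi, hdf⟩
      have hdge : 1 - ∑ e ∈ Si, γ e ≤ ∑ e ∈ Si, d e := by
        rw [hdsum Si]
        have key : (if repAux Si ∈ Si then 1 - ∑ e ∈ Si, γ e else 0) ≤
            ∑ Si' ∈ Sdef, if repAux Si' ∈ Si then 1 - ∑ e ∈ Si', γ e else 0 := by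
          refine Finset.single_le_sum (f := fun Si' => if repAux Si' ∈ Si then 1 - ∑ e ∈ Si', γ e else 0) (fun Si' hSi' => ?_) hSidef
          have := (Finset.mem_filter.1 hSi').2
          split
          · linarith
          · exact le_rfl
        rwa [if_pos (repAux_mem (hSine Si hSi))] at key
      linarith
    · push_neg at hdf
      linarith
  -- u constraints
  have hxU : ∀ u ∈ U, 1 ≤ ∑ v ∈ Vars.filter (u ∈ ·), x v := by
    intro u hu
    have h1 : 1 ≤ ∑ e ∈ E.filter (u ∈ ·), γ e := by
      have := hU hu
      rw [hB, Finset.mem_filter] at this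
      exact this.2
    have h2 : ∑ e ∈ E.filter (u ∈ ·), γ e =
        ∑ e ∈ E, if u ∈ e then γ e else 0 := Finset.sum_filter _ _
    have h3 : ∑ e ∈ E, (if u ∈ e then γ e else 0) ≤
        ∑ e ∈ E, (if φ e ∈ Vars.filter (u ∈ ·) then γ e else 0) := by
      refine Finset.sum_le_sum fun e he => ?_
      by_cases hue : u ∈ e
      · obtain ⟨hm, hum⟩ := hφ e he u hu hue
        rw [if_pos hue, if_pos (Finset.mem_filter.2 ⟨hm, hum⟩)]
      · rw [if_neg hue]
        split
        · exact hγ0 e he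
        · exact le_rfl
    have h4 : ∑ v ∈ Vars.filter (u ∈ ·), gp v ≤ ∑ v ∈ Vars.filter (u ∈ ·), x v := by
      refine Finset.sum_le_sum fun v _ => ?_
      rw [hxdef]
      have := hd0 v
      dsimp only
      linarith
    rw [hgpsum (Vars.filter (u ∈ ·))] at h4
    linarith
  -- the objective value of x
  have hobj : ∑ v ∈ Vars, x v ≤ k + Δ := by
    have hsplit : ∑ v ∈ Vars, x v = (∑ v ∈ Vars, gp v) + ∑ v ∈ Vars, d v := by
      rw [hxdef]; exact Finset.sum_add_distrib
    have h1 : ∑ v ∈ Vars, gp v ≤ ∑ e ∈ E, γ e := by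
      rw [hgpsum Vars]
      refine Finset.sum_le_sum fun e he => ?_
      split
      · exact le_rfl
      · exact hγ0 e he
    have h2 : ∑ v ∈ Vars, d v ≤ Δ := by
      rw [hdsum Vars, hΔdef]
      refine Finset.sum_le_sum fun Si hSi => ?_
      have := (Finset.mem_filter.1 hSi).2
      split
      · exact le_rfl
      · linarith
    linarith
  -- x is feasible for the LP in the form used by hD
  have hmem : (∑ v ∈ Vars, x v) ∈ {w : ℝ | ∃ x : Finset V → ℝ, (∀ e, 0 ≤ x e) ∧
      (∀ Co ∈ C, 1 ≤ ∑ e ∈ Co, x e) ∧ w = ∑ e ∈ Vars, x e} := by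
    refine ⟨x, hx0, ?_, rfl⟩
    intro Co hCo
    rcases Finset.mem_union.1 hCo with h | h
    · exact hxS _ h
    · obtain ⟨u, hu, rfl⟩ := Finset.mem_image.1 h
      exact hxU u hu
  have hoptle : opt ≤ ∑ v ∈ Vars, x v := hopt2.1 hmem
  have hΔgt : 1 / (D : ℝ) < Δ := by linarith
  -- conclude
  have hDpos : (0 : ℝ) ≤ 1 / (D : ℝ) := by positivity
  have hSdefne : Sdef.Nonempty := by
    rcases Finset.eq_empty_or_nonempty Sdef with h | h
    · rw [hΔdef, h] at hΔgt
      simp at hΔgt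
      linarith
    · exact h
  have hScard : 0 < S.card := by
    obtain ⟨Si, hSi⟩ := hSdefne
    exact Finset.card_pos.2 ⟨Si, (Finset.mem_filter.1 hSi).1⟩
  have hconst : ∑ _Si ∈ Sdef, (1 / ((D : ℝ) * (S.card : ℝ))) < Δ := by
    rw [Finset.sum_const, nsmul_eq_mul]
    rcases Nat.eq_zero_or_pos D with hD0 | hD0
    · rw [hD0]
      simp only [Nat.cast_zero, zero_mul, div_zero, mul_zero]
      rw [hD0] at hΔgt
      simpa using hΔgt
    · have hD0' : (0 : ℝ) < D := by exact_mod_cast hD0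
      have hSc' : (0 : ℝ) < S.card := by exact_mod_cast hScard
      have hle : (Sdef.card : ℝ) * (1 / ((D : ℝ) * (S.card : ℝ))) ≤ 1 / (D : ℝ) := by
        have hcardle : (Sdef.card : ℝ) ≤ (S.card : ℝ) := by
          exact_mod_cast Finset.card_le_card (Finset.filter_subset _ _)
        rw [mul_one_div, div_le_div_iff₀ (by positivity) hD0']
        nlinarith
      linarith
  obtain ⟨Sstar, hSstar, hlt⟩ := Finset.exists_lt_of_sum_lt hconst
  exact ⟨Sstar, (Finset.mem_filter.1 hSstar).1, hlt⟩
end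

section
/- Let (S,U) be a well-formed pair (with respect to γ) whose elements all have size at most c−1, let S ∈ S be an extended element, S' a set of edges (extending set), and L = (⋂S ∩ B(γ)) \ ⋃S' the light vertices. Then the pair (S'', U') with S'' = (S \ {S}) ∪ { S ∪ {e} : e ∈ S' } and U' = U ∪ L is again a well-formed pair. -/
open scoped Classical

/-- Let `(S,U)` be a well-formed pair (w.r.t. `γ`) all of whose elements have
size at most `c-1`, let `S₀ ∈ S` be the extended element, `S'` an extending set of hyperedges,
and `L = (⋂S₀ ∩ B(γ)) \ ⋃S'` the light vertices. Then
`((S \ {S₀}) ∪ {S₀ ∪ {e} : e ∈ S'}, U ∪ L)` is again a well-formed pair. -/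
theorem stmt_12 {V : Type} [Fintype V] [DecidableEq V]
    (c : ℕ) (hc : 1 ≤ c)
    (E : Finset (Finset V)) (hE : ∀ e ∈ E, e.Nonempty)
    (γ : Finset V → ℝ)
    (hγ : ∀ e ∈ E, 0 ≤ γ e ∧ γ e ≤ 1) (hγE : ∀ e ∉ E, γ e = 0)
    (B : Finset V)
    (hB : B = Finset.univ.filter fun v : V => 1 ≤ ∑ e ∈ E.filter (v ∈ ·), γ e)
    (S : Finset (Finset (Finset V))) (U : Finset V)
    (hU : U ⊆ B)
    (hS : ∀ Si ∈ S, Si ⊆ E ∧ Si.card ≤ c)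
    (hcover : ∀ v ∈ B, v ∉ U → ∃ Si ∈ S, ∀ e ∈ Si, v ∈ e)
    (hsize : ∀ Si ∈ S, Si.card ≤ c - 1)
    (S₀ : Finset (Finset V)) (hS₀ : S₀ ∈ S)
    (S' : Finset (Finset V)) (hS' : S' ⊆ E)
    (L : Finset V)
    (hL : L = (B.filter fun v => ∀ e ∈ S₀, v ∈ e) \ S'.sup id) :
    (U ∪ L ⊆ B) ∧
    (∀ Si ∈ (S.erase S₀) ∪ S'.image (fun e => insert e S₀), Si ⊆ E ∧ Si.card ≤ c) ∧
    (∀ v ∈ B, v ∉ U ∪ L →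
      ∃ Si ∈ (S.erase S₀) ∪ S'.image (fun e => insert e S₀), ∀ e ∈ Si, v ∈ e) := by
  refine ⟨?_, ?_, ?_⟩
  · intro v hv
    rcases Finset.mem_union.1 hv with h | h
    · exact hU h
    · rw [hL] at h
      exact (Finset.mem_filter.1 (Finset.mem_sdiff.1 h).1).1
  · intro Si hSi
    rcases Finset.mem_union.1 hSi with h | h
    · exact hS Si (Finset.mem_of_mem_erase h)
    · rcases Finset.mem_image.1 h with ⟨e, he, rfl⟩
      refine ⟨Finset.insert_subset (hS' he) (hS S₀ hS₀).1, ?_⟩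
      calc (insert e S₀).card ≤ S₀.card + 1 := Finset.card_insert_le _ _
        _ ≤ (c - 1) + 1 := by exact Nat.add_le_add_right (hsize S₀ hS₀) 1
        _ = c := Nat.succ_pred_eq_of_pos hc
  · intro v hvB hvUL
    have hvU : v ∉ U := fun h => hvUL (Finset.mem_union_left _ h)
    have hvL : v ∉ L := fun h => hvUL (Finset.mem_union_right _ h)
    obtain ⟨Si, hSiS, hSiv⟩ := hcover v hvB hvU
    by_cases hne : Si = S₀
    · subst hne
      have : v ∈ S'.sup id := by
        by_contra hvs
        exact hvL (by rw [hL]; exact Finset.mem_sdiff.2 ⟨Finset.mem_filter.2 ⟨hvB, hSiv⟩, hvs⟩)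
      obtain ⟨e, he, hve⟩ := Finset.mem_sup.1 this
      refine ⟨insert e Si, Finset.mem_union_right _ (Finset.mem_image.2 ⟨e, he, rfl⟩), ?_⟩
      intro f hf
      rcases Finset.mem_insert.1 hf with rfl | hf
      · exact hve
      · exact hSiv f hf
    · exact ⟨Si, Finset.mem_union_left _ (Finset.mem_erase.2 ⟨hne, hSiS⟩), hSiv⟩
end

section
/- Let (S,U) be a well-formed pair (with respect to γ) containing an element S* of size exactly c, for a (c,d)-hypergraph H. Then the folding (S', U') with S' = S \ {S*} and U' = U ∪ (⋂S* ∩ B(γ)) is a well-formed pair, and |U'| ≤ |U| + d. -/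
open scoped Classical

/-- Let `(S,U)` be a well-formed pair (w.r.t. `γ`) for a `(c,d)`-hypergraph `H`,
containing an element `S*` of size exactly `c`. Then the folding
`(S \ {S*}, U ∪ (⋂S* ∩ B(γ)))` is a well-formed pair, and `|U'| ≤ |U| + d`. -/
theorem stmt_13 {V : Type} [Fintype V] [DecidableEq V]
    (c d : ℕ)
    (E : Finset (Finset V)) (hE : ∀ e ∈ E, e.Nonempty)
    (hcd : ∀ E' ⊆ E, E'.card = c → (E'.inf id).card ≤ d)
    (γ : Finset V → ℝ)
    (hγ : ∀ e ∈ E, 0 ≤ γ e ∧ γ e ≤ 1) (hγE : ∀ e ∉ E, γ e = 0)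
    (B : Finset V)
    (hB : B = Finset.univ.filter fun v : V => 1 ≤ ∑ e ∈ E.filter (v ∈ ·), γ e)
    (S : Finset (Finset (Finset V))) (U : Finset V)
    (hU : U ⊆ B)
    (hS : ∀ Si ∈ S, Si ⊆ E ∧ Si.card ≤ c)
    (hcover : ∀ v ∈ B, v ∉ U → ∃ Si ∈ S, ∀ e ∈ Si, v ∈ e)
    (Sstar : Finset (Finset V)) (hSstar : Sstar ∈ S) (hSc : Sstar.card = c) :
    (U ∪ (B.filter fun v => ∀ e ∈ Sstar, v ∈ e) ⊆ B) ∧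
    (∀ Si ∈ S.erase Sstar, Si ⊆ E ∧ Si.card ≤ c) ∧
    (∀ v ∈ B, v ∉ U ∪ (B.filter fun v => ∀ e ∈ Sstar, v ∈ e) →
      ∃ Si ∈ S.erase Sstar, ∀ e ∈ Si, v ∈ e) ∧
    (U ∪ (B.filter fun v => ∀ e ∈ Sstar, v ∈ e)).card ≤ U.card + d := by
  have hSsub := hS Sstar hSstar
  refine ⟨?_, ?_, ?_, ?_⟩
  · intro v hv
    rcases Finset.mem_union.1 hv with h | h
    · exact hU h
    · exact (Finset.mem_filter.1 h).1
  · intro Si hSi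
    exact hS Si (Finset.mem_of_mem_erase hSi)
  · intro v hvB hv
    have hvU : v ∉ U := fun h => hv (Finset.mem_union_left _ h)
    obtain ⟨Si, hSiS, hSiv⟩ := hcover v hvB hvU
    refine ⟨Si, Finset.mem_erase.2 ⟨?_, hSiS⟩, hSiv⟩
    rintro rfl
    exact hv (Finset.mem_union_right _ (Finset.mem_filter.2 ⟨hvB, hSiv⟩))
  · calc (U ∪ (B.filter fun v => ∀ e ∈ Sstar, v ∈ e)).card
        ≤ U.card + (B.filter fun v => ∀ e ∈ Sstar, v ∈ e).card :=
          Finset.card_union_le _ _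
      _ ≤ U.card + d := by
          refine Nat.add_le_add_left ?_ _
          refine le_trans (Finset.card_le_card ?_) (hcd Sstar hSsub.1 hSc)
          intro v hvm
          have := (Finset.mem_filter.1 hvm).2
          simp only [Finset.mem_inf, id] at *
          exact fun e he => this e he
end

section
/- For every function g : ℕ → ℕ there exists a function h[g] : ℕ → ℕ such that every g-transformation sequence (A_1,b_1),...,(A_r,b_r) of bare-bones c-pairs satisfies r ≤ h[g](n(A_1,b_1)). -/
/-- The size `n(A,b) = 2^b + ∑_{x ∈ A} x` of a bare-bones pair. -/
def bbpSize (p : Multiset ℕ × ℕ) : ℕ := 2 ^ p.2 + p.1.sum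

/-- A folding of a bare-bones `c`-pair: remove one occurrence of `c` from the multiset and
increase the integer component by some nonnegative amount. -/
def IsFolding (c : ℕ) (p q : Multiset ℕ × ℕ) : Prop :=
  c ∈ p.1 ∧ q.1 = p.1.erase c ∧ p.2 ≤ q.2

/-- An extension of a bare-bones `c`-pair: remove one occurrence of some `x < c`, add `d₁ ≥ 0`
occurrences of `x + 1`, and increase the integer component by some nonnegative amount. -/
def IsExtension (c : ℕ) (p q : Multiset ℕ × ℕ) : Prop :=
  ∃ x ∈ p.1, x < c ∧ ∃ d₁ : ℕ, q.1 = p.1.erase x + Multiset.replicate d₁ (x + 1) ∧ p.2 ≤ q.2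

/-- A `g`-transformation: a folding or extension whose resulting size is at most `g` of the
size of the input pair. -/
def IsGTrans (c : ℕ) (g : ℕ → ℕ) (p q : Multiset ℕ × ℕ) : Prop :=
  (IsFolding c p q ∨ IsExtension c p q) ∧ bbpSize q ≤ g (bbpSize p)

/-!
Every transformation strictly decreases the multiset `{c - x | x ∈ A}` in the Dershowitz–Manna
order: a folding deletes an element, and an extension replaces `c - x` by copies of the smaller
`c - (x + 1)`. So there are no infinite transformation sequences. Moreover a pair has only
finitely many `g`-transformations, since pairs of bounded size with positive entries are finitely
many. By König's lemma the sequences starting at a given pair have bounded length, and taking the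
maximum of these bounds over the finitely many pairs of size at most `n` gives `h[g](n)`.
-/

theorem exists_length_bound_of_wellFounded_of_finite {α : Type*} (R : α → α → Prop)
    (hwf : WellFounded (flip R)) (hfin : ∀ a, {b | R a b}.Finite) (a : α) :
    ∃ B : ℕ, ∀ (r : ℕ) (P : ℕ → α), P 0 = a →
      (∀ i, i + 1 < r → R (P i) (P (i + 1))) → r ≤ B := by
  induction a using hwf.induction with
  | _ a ih =>
  choose! B hB using ih
  refine ⟨1 + (hfin a).toFinset.sup B, fun r P hP0 hP => ?_⟩
  rcases Nat.lt_or_ge r 2 with hr | hr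
  · omega
  have hstep : R a (P 1) := hP0 ▸ hP 0 (by omega)
  have htail : r - 1 ≤ B (P 1) :=
    hB (P 1) hstep (r - 1) (fun i => P (i + 1)) rfl fun i hi => hP (i + 1) (by omega)
  have hsup : B (P 1) ≤ (hfin a).toFinset.sup B :=
    Finset.le_sup ((hfin a).mem_toFinset.mpr hstep)
  omega

theorem Multiset.finite_setOf_pos_sum_le (n : ℕ) :
    {s : Multiset ℕ | (∀ x ∈ s, 1 ≤ x) ∧ s.sum ≤ n}.Finite := by
  refine ((Set.finite_Iic n).biUnion fun k _ =>
    Set.finite_range (Nat.Partition.parts : k.Partition → Multiset ℕ)).subset ?_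
  rintro s ⟨hpos, hsum⟩
  exact Set.mem_biUnion (x := s.sum) hsum ⟨⟨s, fun hx => hpos _ hx, rfl⟩, rfl⟩

theorem finite_setOf_bbpSize_le (n : ℕ) :
    {p : Multiset ℕ × ℕ | (∀ x ∈ p.1, 1 ≤ x) ∧ bbpSize p ≤ n}.Finite := by
  refine ((Multiset.finite_setOf_pos_sum_le n).prod (Set.finite_Iic n)).subset ?_
  rintro ⟨A, b⟩ ⟨hpos, hsize⟩
  have hb : b < 2 ^ b := Nat.lt_two_pow_self
  simp only [bbpSize] at hsize
  exact ⟨⟨hpos, show A.sum ≤ n by omega⟩, show b ≤ n by omega⟩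

section Transformation

open Multiset

variable {c : ℕ} {p q : Multiset ℕ × ℕ}

theorem IsFolding.isDershowitzMannaLT_map (h : IsFolding c p q) :
    IsDershowitzMannaLT (q.1.map (c - ·)) (p.1.map (c - ·)) := by
  obtain ⟨hc, hq, -⟩ := h
  refine ⟨q.1.map (c - ·), 0, {c - c}, singleton_ne_zero _, (add_zero _).symm, ?_, by simp⟩
  rw [hq, ← map_singleton, ← map_add, add_comm, singleton_add, cons_erase hc]

theorem IsExtension.isDershowitzMannaLT_map (h : IsExtension c p q) :
    IsDershowitzMannaLT (q.1.map (c - ·)) (p.1.map (c - ·)) := by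
  obtain ⟨x, hx, hxc, d, hq, -⟩ := h
  refine ⟨(p.1.erase x).map (c - ·), replicate d (c - (x + 1)), {c - x},
    singleton_ne_zero _, ?_, ?_, ?_⟩
  · rw [hq, map_add, map_replicate]
  · rw [← map_singleton, ← map_add, add_comm, singleton_add, cons_erase hx]
  · intro y hy
    rw [eq_of_mem_replicate hy]
    exact ⟨c - x, mem_singleton_self _, by omega⟩

end Transformation

theorem wellFounded_flip_isGTrans (c : ℕ) (g : ℕ → ℕ) : WellFounded (flip (IsGTrans c g)) :=
  Subrelation.wf
    (fun {_ _} h => h.1.elim IsFolding.isDershowitzMannaLT_map IsExtension.isDershowitzMannaLT_map)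
    (InvImage.wf (fun p : Multiset ℕ × ℕ => p.1.map (c - ·))
      Multiset.wellFounded_isDershowitzMannaLT)

/-- For every function `g : ℕ → ℕ` there is a function `h[g] : ℕ → ℕ` such that
every `g`-transformation sequence of bare-bones `c`-pairs `(A_0,b_0), …, (A_{r-1},b_{r-1})`
(a sequence of `r` pairs, each a `g`-transformation of the previous one, entries of each
multiset lying in `{1, …, c}`) has length `r ≤ h[g](n(A_0,b_0))`. -/
theorem stmt_14 (g : ℕ → ℕ) (c : ℕ) :
    ∃ h : ℕ → ℕ, ∀ (r : ℕ) (P : ℕ → Multiset ℕ × ℕ),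
      (∀ i < r, ∀ x ∈ (P i).1, 1 ≤ x ∧ x ≤ c) →
      (∀ i, i + 1 < r → IsGTrans c g (P i) (P (i + 1))) →
      r ≤ h (bbpSize (P 0)) := by
  let R (p q : Multiset ℕ × ℕ) : Prop := IsGTrans c g p q ∧ ∀ x ∈ q.1, 1 ≤ x
  have hwf : WellFounded (flip R) := Subrelation.wf (fun h => h.1) (wellFounded_flip_isGTrans c g)
  have hfin (p : Multiset ℕ × ℕ) : {q | R p q}.Finite :=
    (finite_setOf_bbpSize_le (g (bbpSize p))).subset fun q hq => ⟨hq.2, hq.1.2⟩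
  choose B hB using exists_length_bound_of_wellFounded_of_finite R hwf hfin
  refine ⟨fun n => (finite_setOf_bbpSize_le n).toFinset.sup B, fun r P hent htr => ?_⟩
  rcases Nat.eq_zero_or_pos r with rfl | hr
  · exact Nat.zero_le _
  calc r ≤ B (P 0) :=
        hB (P 0) r P rfl fun i hi => ⟨htr i hi, fun x hx => (hent (i + 1) hi x hx).1⟩
    _ ≤ _ := Finset.le_sup ((finite_setOf_bbpSize_le _).mem_toFinset.mpr
        ⟨fun x hx => (hent 0 hr x hx).1, le_rfl⟩)
end
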